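/- The function g_n(b) = Σ_{k=0}^∞ q^{k(k+2n)/4} b^k / (q;q)_k satisfies the three-term recurrence g_{n+1}(b) = g_{n-1}(b) - b q^{(2n-1)/4} g_n(b) for all integers n and all b. -/

import Mathlib

open Finset Filter Real

/-- `(q;q)_k = ∏_{j=1}^k (1 - q^j)`. -/
noncomputable def qFac (q : ℝ) (k : ℕ) : ℝ :=
  ∏ j ∈ Finset.range k, (1 - q ^ (j + 1))

/-- `g_n(b) = Σ_{k=0}^∞ q^{k(k+2n)/4} b^k / (q;q)_k`. -/
noncomputable def gFun (q : ℝ) (n : ℤ) (b : ℂ) : ℂ :=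
  ∑' k : ℕ, ((q ^ (((k : ℝ) * ((k : ℝ) + 2 * (n : ℝ))) / 4) : ℝ) : ℂ) * b ^ k / (qFac q k : ℂ)

lemma qFac_pos {q : ℝ} (hq : 0 < q) (hq1 : q < 1) (k : ℕ) : 0 < qFac q k := by
  refine Finset.prod_pos fun j _ => sub_pos.2 ?_
  exact pow_lt_one₀ hq.le hq1 (Nat.succ_ne_zero j)

lemma qFac_ge {q : ℝ} (hq : 0 < q) (hq1 : q < 1) (k : ℕ) : (1 - q) ^ k ≤ qFac q k := by
  have : (1 - q) ^ k = ∏ _j ∈ Finset.range k, (1 - q) := by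
    rw [Finset.prod_const, Finset.card_range]
  rw [this]
  refine Finset.prod_le_prod (fun j _ => by linarith) (fun j _ => ?_)
  have h : q ^ (j + 1) ≤ q ^ 1 := pow_le_pow_of_le_one hq.le hq1.le (by omega)
  rw [pow_one] at h
  linarith

lemma summable_aux {q : ℝ} (hq : 0 < q) (hq1 : q < 1) (n : ℤ) {c : ℝ} (hc : 0 < c) :
    Summable (fun k : ℕ => q ^ (((k : ℝ) * ((k : ℝ) + 2 * (n : ℝ))) / 4) * c ^ k) := by
  have hpos : ∀ k : ℕ, 0 < q ^ (((k : ℝ) * ((k : ℝ) + 2 * (n : ℝ))) / 4) * c ^ k := by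
    intro k
    exact mul_pos (Real.rpow_pos_of_pos hq _) (pow_pos hc _)
  apply summable_of_ratio_test_tendsto_lt_one (l := 0) one_pos
  · exact Filter.Eventually.of_forall fun k => (hpos k).ne'
  · have hratio : ∀ k : ℕ, ‖(fun k : ℕ => q ^ (((k : ℝ) * ((k : ℝ) + 2 * (n : ℝ))) / 4) * c ^ k) (k+1)‖ /
        ‖(fun k : ℕ => q ^ (((k : ℝ) * ((k : ℝ) + 2 * (n : ℝ))) / 4) * c ^ k) k‖
        = q ^ ((2 * (k : ℝ) + 1 + 2 * (n : ℝ)) / 4) * c := by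
      intro k
      have hcc : c ^ (k + 1) / c ^ k = c := by
        rw [pow_succ]
        field_simp
      rw [Real.norm_of_nonneg (hpos _).le, Real.norm_of_nonneg (hpos k).le,
        mul_div_mul_comm, hcc, ← Real.rpow_sub hq]
      congr 1
      push_cast
      ring
    rw [show (0 : ℝ) = 0 * c by ring]
    refine Tendsto.congr (fun k => (hratio k).symm) (Tendsto.mul_const c ?_)
    have h1 : Tendsto (fun k : ℕ => (2 * (k : ℝ) + 1 + 2 * (n : ℝ)) / 4) atTop atTop := by
      apply Filter.Tendsto.atTop_div_const (by norm_num)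
      apply tendsto_atTop_add_const_right
      apply tendsto_atTop_add_const_right
      exact (tendsto_natCast_atTop_atTop).const_mul_atTop (by norm_num)
    exact (tendsto_rpow_atTop_of_base_lt_one q (by linarith) hq1).comp h1

lemma summable_term {q : ℝ} (hq : 0 < q) (hq1 : q < 1) (n : ℤ) (b : ℂ) :
    Summable (fun k : ℕ => ((q ^ (((k : ℝ) * ((k : ℝ) + 2 * (n : ℝ))) / 4) : ℝ) : ℂ) * b ^ k / (qFac q k : ℂ)) := by
  have hc : (0 : ℝ) < (‖b‖ + 1) / (1 - q) := by
    apply div_pos (by positivity) (by linarith)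
  refine Summable.of_norm_bounded (summable_aux hq hq1 n hc) fun k => ?_
  have hqf := qFac_pos hq hq1 k
  rw [norm_div, norm_mul, Complex.norm_real, Complex.norm_real,
    Real.norm_of_nonneg (Real.rpow_pos_of_pos hq _).le, Real.norm_of_nonneg hqf.le,
    norm_pow, mul_div_assoc]
  have h1 : ‖b‖ ^ k / qFac q k ≤ ((‖b‖ + 1) / (1 - q)) ^ k := by
    rw [div_pow]
    apply div_le_div₀ (by positivity) (pow_le_pow_left₀ (norm_nonneg b) (by linarith) k)
      (pow_pos (by linarith) k) (qFac_ge hq hq1 k)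
  exact mul_le_mul_of_nonneg_left h1 (Real.rpow_pos_of_pos hq _).le

theorem gFun_recurrence (q : ℝ) (hq : 0 < q) (hq1 : q < 1) (n : ℤ) (b : ℂ) :
    gFun q (n + 1) b = gFun q (n - 1) b - b * ((q ^ ((2 * (n : ℝ) - 1) / 4) : ℝ) : ℂ) * gFun q n b := by
  set f : ℤ → ℕ → ℂ := fun m k =>
    ((q ^ (((k : ℝ) * ((k : ℝ) + 2 * (m : ℝ))) / 4) : ℝ) : ℂ) * b ^ k / (qFac q k : ℂ) with hf
  have hs : ∀ m : ℤ, Summable (f m) := fun m => summable_term hq hq1 m b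
  have hd0 : f (n - 1) 0 - f (n + 1) 0 = 0 := by simp [hf]
  have hkey : ∀ k : ℕ, f (n - 1) (k + 1) - f (n + 1) (k + 1)
      = b * ((q ^ ((2 * (n : ℝ) - 1) / 4) : ℝ) : ℂ) * f n k := by
    intro k
    have hqk : q ^ (k + 1) < 1 := pow_lt_one₀ hq.le hq1 (Nat.succ_ne_zero k)
    have h1q : (1 : ℝ) - q ^ (k + 1) ≠ 0 := by linarith
    have hqf : (qFac q k : ℝ) ≠ 0 := (qFac_pos hq hq1 k).ne'
    set e1 : ℝ := (((k : ℝ) + 1) * (((k : ℝ) + 1) + 2 * ((n : ℝ) - 1))) / 4 with he1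
    have h2 : q ^ ((((k : ℕ) + 1 : ℕ) : ℝ) * ((((k : ℕ) + 1 : ℕ) : ℝ) + 2 * (((n + 1 : ℤ)) : ℝ)) / 4)
        = q ^ e1 * q ^ (k + 1) := by
      rw [← Real.rpow_natCast q (k + 1), ← Real.rpow_add hq]
      congr 1
      push_cast
      ring
    have h1 : q ^ ((((k : ℕ) + 1 : ℕ) : ℝ) * ((((k : ℕ) + 1 : ℕ) : ℝ) + 2 * (((n - 1 : ℤ)) : ℝ)) / 4) = q ^ e1 := by
      congr 1
      push_cast
      ring
    have h3 : q ^ ((2 * (n : ℝ) - 1) / 4) * q ^ (((k : ℝ) * ((k : ℝ) + 2 * (n : ℝ))) / 4) = q ^ e1 := by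
      rw [← Real.rpow_add hq]
      congr 1
      push_cast
      ring
    have hfac : qFac q (k + 1) = qFac q k * (1 - q ^ (k + 1)) := by
      rw [qFac, Finset.prod_range_succ]; rfl
    have hqfC : (qFac q k : ℂ) ≠ 0 := by exact_mod_cast hqf
    have h1qC : ((1 - q ^ (k + 1) : ℝ) : ℂ) ≠ 0 := by exact_mod_cast h1q
    have h3' : ((q ^ ((2 * (n : ℝ) - 1) / 4) : ℝ) : ℂ) * ((q ^ (((k : ℝ) * ((k : ℝ) + 2 * (n : ℝ))) / 4) : ℝ) : ℂ)
        = ((q ^ e1 : ℝ) : ℂ) := by rw [← Complex.ofReal_mul, h3]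
    simp only [hf]
    rw [h1, h2, hfac]
    have hrhs : b * ((q ^ ((2 * (n : ℝ) - 1) / 4) : ℝ) : ℂ) *
        (((q ^ (((k : ℝ) * ((k : ℝ) + 2 * (n : ℝ))) / 4) : ℝ) : ℂ) * b ^ k / (qFac q k : ℂ))
        = ((q ^ ((2 * (n : ℝ) - 1) / 4) : ℝ) : ℂ) * ((q ^ (((k : ℝ) * ((k : ℝ) + 2 * (n : ℝ))) / 4) : ℝ) : ℂ) * b ^ (k + 1) / (qFac q k : ℂ) := by
      ring
    rw [hrhs, h3']
    push_cast at h1qC ⊢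
    field_simp
  have hdsum : Summable (fun k => f (n - 1) k - f (n + 1) k) := (hs _).sub (hs _)
  have h := Summable.tsum_eq_zero_add hdsum
  rw [hd0, zero_add] at h
  have hsub : gFun q (n - 1) b - gFun q (n + 1) b
      = b * ((q ^ ((2 * (n : ℝ) - 1) / 4) : ℝ) : ℂ) * gFun q n b := by
    rw [gFun, gFun, gFun, ← Summable.tsum_sub (hs (n - 1)) (hs (n + 1))]
    show ∑' k, (f (n-1) k - f (n+1) k) = _
    rw [h]
    calc ∑' k : ℕ, (f (n - 1) (k + 1) - f (n + 1) (k + 1))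
        = ∑' k : ℕ, b * ((q ^ ((2 * (n : ℝ) - 1) / 4) : ℝ) : ℂ) * f n k := by
          exact tsum_congr hkey
      _ = b * ((q ^ ((2 * (n : ℝ) - 1) / 4) : ℝ) : ℂ) * ∑' k, f n k := tsum_mul_left
  linear_combination -hsub
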